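/- arXiv:1805.05724 — 8 statements merged into one kernel-verified Lean document; each statement's English description precedes it below -/
import Mathlib

section
/- A positive real square matrix M satisfying M² = cM for a positive real c has rank 1. -/
/-!
Since `M * M = c • M`, every vector `M *ᵥ x`, in particular every column of `M`, is an eigenvector
of `M` for `c`, and the columns are positive. For a positive matrix, a nonnegative eigenvector
with a zero entry vanishes. Subtracting from an eigenvector `v` the largest multiple of a positive
eigenvector `u` lying below it therefore gives `0`, so `v ∈ span {u}`: the range of `M` is the
line spanned by one column.
-/

namespace Matrix

theorem mulVec_mulVec_eq_smul_of_mul_self_eq_smul {n R : Type*} [Fintype n] [CommSemiring R]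
    {M : Matrix n n R} {c : R} (h : M * M = c • M) (x : n → R) :
    M *ᵥ (M *ᵥ x) = c • (M *ᵥ x) := by
  rw [mulVec_mulVec, h, smul_mulVec]

variable {n 𝕜 : Type*} [Fintype n] [Field 𝕜] [LinearOrder 𝕜] [IsStrictOrderedRing 𝕜]
  {M : Matrix n n 𝕜} {c : 𝕜}

theorem eq_zero_of_nonneg_of_mulVec_eq_smul_of_apply_eq_zero (hM : ∀ i j, 0 < M i j)
    {w : n → 𝕜} (hw : 0 ≤ w) (heig : M *ᵥ w = c • w) {i : n} (hi : w i = 0) : w = 0 := by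
  by_contra hne
  obtain ⟨k, hk⟩ : ∃ k, 0 < w k := by
    by_contra! hle
    exact hne (le_antisymm hle hw)
  have hpos : 0 < (M *ᵥ w) i :=
    Finset.sum_pos' (fun j _ => mul_nonneg (hM i j).le (hw j))
      ⟨k, Finset.mem_univ k, mul_pos (hM i k) hk⟩
  simp [heig, hi] at hpos

theorem exists_eq_smul_of_mulVec_eq_smul (hM : ∀ i j, 0 < M i j) {u v : n → 𝕜}
    (hu : ∀ i, 0 < u i) (hMu : M *ᵥ u = c • u) (hMv : M *ᵥ v = c • v) : ∃ t : 𝕜, v = t • u := by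
  cases isEmpty_or_nonempty n
  · exact ⟨0, Subsingleton.elim _ _⟩
  obtain ⟨i, -, hi⟩ := Finset.exists_min_image Finset.univ (fun i => v i / u i) Finset.univ_nonempty
  refine ⟨v i / u i, sub_eq_zero.mp <|
    eq_zero_of_nonneg_of_mulVec_eq_smul_of_apply_eq_zero hM (c := c) (i := i) (fun j => ?_) ?_ ?_⟩
  · simpa [sub_nonneg] using (le_div_iff₀ (hu j)).mp (hi j (Finset.mem_univ j))
  · rw [mulVec_sub, mulVec_smul, hMu, hMv, smul_sub, smul_comm]
  · simp [div_mul_cancel₀ _ (hu i).ne']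

theorem rank_eq_one_of_pos_of_mul_self_eq_smul [Nonempty n] (hM : ∀ i j, 0 < M i j)
    (h : M * M = c • M) : M.rank = 1 := by
  classical
  let j : n := Classical.arbitrary n
  have hcol : M *ᵥ M.col j = c • M.col j := by
    rw [← mulVec_single_one]; exact mulVec_mulVec_eq_smul_of_mul_self_eq_smul h _
  have hrange : LinearMap.range M.mulVecLin = 𝕜 ∙ M.col j := by
    refine le_antisymm ?_ ?_
    · rintro _ ⟨x, rfl⟩
      obtain ⟨t, ht⟩ := exists_eq_smul_of_mulVec_eq_smul hM (fun i => hM i j) hcol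
        (mulVec_mulVec_eq_smul_of_mul_self_eq_smul h x)
      exact Submodule.mem_span_singleton.mpr ⟨t, ht.symm⟩
    · rw [Submodule.span_singleton_le_iff_mem, ← mulVec_single_one]
      exact LinearMap.mem_range_self M.mulVecLin _
  rw [rank, hrange, finrank_span_singleton]
  exact fun h0 => (hM j j).ne' (congrFun h0 j)

end Matrix

theorem stmt1_general {r : ℕ} (hr : 0 < r) (M : Matrix (Fin r) (Fin r) ℝ)
    (hM : ∀ i j, 0 < M i j) (c : ℝ) (h : M * M = c • M) :
    M.rank = 1 :=
  have : Nonempty (Fin r) := ⟨⟨0, hr⟩⟩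
  M.rank_eq_one_of_pos_of_mul_self_eq_smul hM h

/-- A positive real square matrix `M` satisfying `M² = c • M` for a positive real `c`
has rank 1. -/
theorem stmt1 {r : ℕ} (hr : 0 < r) (M : Matrix (Fin r) (Fin r) ℝ)
    (hM : ∀ i j, 0 < M i j) (c : ℝ) (hc : 0 < c) (h : M * M = c • M) :
    M.rank = 1 :=
  stmt1_general hr M hM c h
end

section
/- A positive real square matrix M satisfying M² = cM has trace equal to c. -/
/-!
Every column of `M` is an eigenvector of `M` for the eigenvalue `c`, and a positive matrix has,
up to scaling, at most one eigenvector for a given eigenvalue once one of them is positive. So all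
columns are proportional, `M = u vᵀ`, and then `M² = (v ⬝ᵥ u) • M = (trace M) • M`; comparing with
`M² = c • M` at a (nonzero) entry gives `trace M = c`.
-/

namespace Matrix

variable {n 𝕜 : Type*} [Fintype n] [Field 𝕜] [LinearOrder 𝕜] [IsStrictOrderedRing 𝕜]

theorem exists_eq_smul_of_mulVec_eq_smul_s2 {M : Matrix n n 𝕜} (hM : ∀ i j, 0 < M i j) {c : 𝕜}
    {x y : n → 𝕜} (hx : M *ᵥ x = c • x) (hy : M *ᵥ y = c • y) (hy_pos : ∀ i, 0 < y i) :
    ∃ t : 𝕜, x = t • y := by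
  cases isEmpty_or_nonempty n
  · exact ⟨0, Subsingleton.elim _ _⟩
  -- For the least ratio `t = x i / y i`, `x - t • y` is a nonnegative eigenvector vanishing at
  -- some `i₀`; the `i₀`-th entry of `M *ᵥ (x - t • y)` is then a vanishing positive combination.
  obtain ⟨i₀, hi₀⟩ := Finite.exists_min fun i => x i / y i
  set t := x i₀ / y i₀
  set w := x - t • y with hw_def
  have hw_nonneg : ∀ i, 0 ≤ w i := fun i => by
    have hratio := (div_le_div_iff₀ (hy_pos i₀) (hy_pos i)).mp (hi₀ i)
    simp only [hw_def, Pi.sub_apply, Pi.smul_apply, smul_eq_mul, sub_nonneg, t]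
    rw [div_mul_eq_mul_div, div_le_iff₀ (hy_pos i₀)]
    linarith
  have hw_i₀ : w i₀ = 0 := by
    simp [hw_def, t, div_mul_cancel₀ _ (hy_pos i₀).ne']
  have hMw : M *ᵥ w = c • w := by
    rw [hw_def, mulVec_sub, mulVec_smul, hx, hy, smul_sub, smul_comm]
  have hsum : ∑ k, M i₀ k * w k = 0 := by
    simpa [mulVec, dotProduct, hw_i₀] using congrFun hMw i₀
  refine ⟨t, funext fun k => ?_⟩
  have hterm := (Finset.sum_eq_zero_iff_of_nonneg fun k _ =>
    mul_nonneg (hM i₀ k).le (hw_nonneg k)).mp hsum k (Finset.mem_univ k)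
  have hwk : w k = 0 := (mul_eq_zero.mp hterm).resolve_left (hM i₀ k).ne'
  simpa [hw_def, sub_eq_zero] using hwk

theorem exists_eq_vecMulVec_of_mul_self_eq_smul [Nonempty n] {M : Matrix n n 𝕜}
    (hM : ∀ i j, 0 < M i j) {c : 𝕜} (h : M * M = c • M) :
    ∃ u v : n → 𝕜, M = vecMulVec u v := by
  obtain ⟨z⟩ := ‹Nonempty n›
  have hcol : ∀ j, M *ᵥ Mᵀ j = c • Mᵀ j := fun j => by
    ext i
    simpa [mul_apply, mulVec, dotProduct] using congrFun (congrFun h i) j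
  choose v hv using fun j =>
    exists_eq_smul_of_mulVec_eq_smul_s2 hM (hcol j) (hcol z) (fun i => hM i z)
  refine ⟨Mᵀ z, v, ext fun i j => ?_⟩
  simpa [vecMulVec_apply, mul_comm] using congrFun (hv j) i

theorem trace_eq_of_mul_self_eq_smul [Nonempty n] {M : Matrix n n 𝕜} (hM : ∀ i j, 0 < M i j)
    {c : 𝕜} (h : M * M = c • M) : M.trace = c := by
  obtain ⟨u, v, hM_eq⟩ := exists_eq_vecMulVec_of_mul_self_eq_smul hM h
  have htrace : M.trace • M = c • M := by
    rw [← h, hM_eq, vecMulVec_mul_vecMulVec, vecMulVec_smul, trace_vecMulVec, dotProduct_comm]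
  obtain ⟨z⟩ := ‹Nonempty n›
  have hzz := congrFun (congrFun htrace z) z
  simp only [smul_apply, smul_eq_mul] at hzz
  exact mul_right_cancel₀ (hM z z).ne' hzz

end Matrix

theorem stmt2_general {r : ℕ} (hr : 0 < r) (M : Matrix (Fin r) (Fin r) ℝ)
    (hM : ∀ i j, 0 < M i j) (c : ℝ) (h : M * M = c • M) :
    Matrix.trace M = c := by
  have : Nonempty (Fin r) := Fin.pos_iff_nonempty.mp hr
  exact Matrix.trace_eq_of_mul_self_eq_smul hM h

/-- A positive real square matrix `M` satisfying `M² = c • M` for a positive real `c`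
has trace equal to `c`. -/
theorem stmt2 {r : ℕ} (hr : 0 < r) (M : Matrix (Fin r) (Fin r) ℝ)
    (hM : ∀ i j, 0 < M i j) (c : ℝ) (hc : 0 < c) (h : M * M = c • M) :
    Matrix.trace M = c :=
  stmt2_general hr M hM c h
end

section
/- Up to simultaneous permutation of rows and columns, the only 2×2 matrices with strictly positive integer entries satisfying M² = 3M are (2 1; 2 1) and (2 2; 1 1). -/
/-!
Write `M = !![a, b; c, d]`. The `(0, 1)` entry of `M * M = 3 • M` reads `b (a + d) = 3 b`, so
`a + d = 3` as `b ≠ 0`; the `(0, 0)` entry then gives `b c = a d`, i.e. `det M = 0`. Positivity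
forces `{a, d} = {1, 2}` and `b c = 2`, which leaves the two listed matrices and their conjugates
by the transposition of `Fin 2`.
-/

open Matrix

namespace Matrix

variable {R : Type*} [CommSemiring R] {M : Matrix (Fin 2) (Fin 2) R} {k : R}

theorem trace_fin_two_eq_of_mul_self_eq_smul [IsCancelMulZero R] (h : M * M = k • M)
    (hb : M 0 1 ≠ 0) : M 0 0 + M 1 1 = k := by
  have h01 := congrFun (congrFun h 0) 1
  simp only [mul_apply, Fin.sum_univ_two, smul_apply, smul_eq_mul] at h01
  exact mul_right_cancel₀ hb (by rw [← h01]; ring)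

theorem mul_antidiag_eq_mul_diag_of_mul_self_eq_smul [IsCancelMulZero R] [IsCancelAdd R]
    (h : M * M = k • M) (hb : M 0 1 ≠ 0) : M 0 1 * M 1 0 = M 0 0 * M 1 1 := by
  have h00 := congrFun (congrFun h 0) 0
  simp only [mul_apply, Fin.sum_univ_two, smul_apply, smul_eq_mul,
    ← trace_fin_two_eq_of_mul_self_eq_smul h hb] at h00
  exact add_left_cancel (h00.trans (by ring))

theorem submatrix_swap_fin_two {α : Type*} (a b c d : α) :
    !![a, b; c, d].submatrix (Equiv.swap 0 1) (Equiv.swap 0 1) = !![d, c; b, a] := by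
  ext i j
  fin_cases i <;> fin_cases j <;> rfl

end Matrix

theorem Nat.cases_of_add_eq_three_of_mul_eq_mul {a b c d : ℕ} (ha : 1 ≤ a) (hd : 1 ≤ d)
    (hsum : a + d = 3) (hprod : b * c = a * d) :
    (a = 2 ∧ b = 1 ∧ c = 2 ∧ d = 1) ∨ (a = 2 ∧ b = 2 ∧ c = 1 ∧ d = 1) ∨
      (a = 1 ∧ b = 2 ∧ c = 1 ∧ d = 2) ∨ (a = 1 ∧ b = 1 ∧ c = 2 ∧ d = 2) := by
  obtain ⟨rfl, rfl⟩ | ⟨rfl, rfl⟩ : (a = 1 ∧ d = 2) ∨ (a = 2 ∧ d = 1) := by omega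
  all_goals
    have hb : b ≤ 2 := Nat.le_of_dvd two_pos ⟨c, hprod.symm⟩
    interval_cases b <;> omega

/-- Up to simultaneous permutation of rows and columns, the only `2 × 2` matrices with
strictly positive integer entries satisfying `M² = 3M` are `(2 1; 2 1)` and `(2 2; 1 1)`. -/
theorem stmt4 (M : Matrix (Fin 2) (Fin 2) ℕ) (hM : ∀ i j, 1 ≤ M i j)
    (h : M * M = 3 • M) :
    ∃ σ : Equiv.Perm (Fin 2),
      M.submatrix σ σ = !![2, 1; 2, 1] ∨ M.submatrix σ σ = !![2, 2; 1, 1] := by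
  have hb0 : M 0 1 ≠ 0 := Nat.one_le_iff_ne_zero.mp (hM 0 1)
  have hsum := trace_fin_two_eq_of_mul_self_eq_smul h hb0
  have hprod := mul_antidiag_eq_mul_diag_of_mul_self_eq_smul h hb0
  rw [eta_fin_two M]
  rcases Nat.cases_of_add_eq_three_of_mul_eq_mul (hM 0 0) (hM 1 1) hsum hprod with
    ⟨ha, hb, hc, hd⟩ | ⟨ha, hb, hc, hd⟩ | ⟨ha, hb, hc, hd⟩ | ⟨ha, hb, hc, hd⟩ <;>
    rw [ha, hb, hc, hd]
  · exact ⟨1, Or.inl (submatrix_id_id _)⟩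
  · exact ⟨1, Or.inr (submatrix_id_id _)⟩
  · exact ⟨Equiv.swap 0 1, Or.inl (submatrix_swap_fin_two _ _ _ _)⟩
  · exact ⟨Equiv.swap 0 1, Or.inr (submatrix_swap_fin_two _ _ _ _)⟩
end

section
/- The only 3×3 matrix with strictly positive integer entries satisfying M² = 3M is the matrix all of whose entries are 1. -/
open Finset

theorem Fin.sum_univ_three_of_ne {α : Type*} [AddCommMonoid α] (f : Fin 3 → α) {a b c : Fin 3}
    (hab : a ≠ b) (hac : a ≠ c) (hbc : b ≠ c) : ∑ l, f l = f a + f b + f c := by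
  have huniv : ({a, b, c} : Finset (Fin 3)) = univ :=
    eq_univ_of_card _ (by simp [card_insert_of_notMem, hab, hac, hbc])
  rw [← huniv, sum_insert (by simp [hab, hac]), sum_pair hbc, add_assoc]

theorem Fin.exists_ne_ne (i j : Fin 3) : ∃ k, k ≠ i ∧ k ≠ j := by
  revert i j; decide

namespace Matrix

theorem mul_apply_fin_three_of_ne (M N : Matrix (Fin 3) (Fin 3) ℕ) (i j : Fin 3) {a b c : Fin 3}
    (hab : a ≠ b) (hac : a ≠ c) (hbc : b ≠ c) :
    (M * N) i j = M i a * N a j + M i b * N b j + M i c * N c j := by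
  rw [mul_apply, Fin.sum_univ_three_of_ne _ hab hac hbc]

section

variable {M : Matrix (Fin 3) (Fin 3) ℕ} (hM : ∀ i j, 1 ≤ M i j) (h : M * M = 3 • M)
include hM h

/-- In the off-diagonal equation `M i i * M i j + M i j * M j j + M i k * M k j = 3 * M i j`
the last term is positive, so `M i i + M j j < 3`. -/
theorem diag_eq_one_of_mul_self_eq_three_smul (i : Fin 3) : M i i = 1 := by
  obtain ⟨j, hji⟩ := exists_ne i
  obtain ⟨k, hki, hkj⟩ := Fin.exists_ne_ne i j
  have hij := congrFun (congrFun h i) j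
  rw [mul_apply_fin_three_of_ne M M i j hji.symm hki.symm hkj.symm] at hij
  simp only [smul_apply, smul_eq_mul] at hij
  have hik : 1 ≤ M i k * M k j := one_le_mul_of_one_le_of_one_le (hM i k) (hM k j)
  have hsum : M i i + M j j < 3 := by nlinarith [hM i j]
  have := hM i i
  have := hM j j
  omega

/-- With `M i i = 1`, the diagonal equation reads `M i j * M j i + M i k * M k i = 2`. -/
theorem apply_eq_one_of_mul_self_eq_three_smul {i j : Fin 3} (hij : i ≠ j) : M i j = 1 := by
  obtain ⟨k, hki, hkj⟩ := Fin.exists_ne_ne i j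
  have hii := congrFun (congrFun h i) i
  rw [mul_apply_fin_three_of_ne M M i i hij hki.symm hkj.symm] at hii
  simp only [smul_apply, smul_eq_mul, diag_eq_one_of_mul_self_eq_three_smul hM h i] at hii
  have hij' : 1 ≤ M i j * M j i := one_le_mul_of_one_le_of_one_le (hM i j) (hM j i)
  have hik : 1 ≤ M i k * M k i := one_le_mul_of_one_le_of_one_le (hM i k) (hM k i)
  have hprod : M i j * M j i = 1 := by omega
  exact Nat.eq_one_of_mul_eq_one_right hprod

end

end Matrix

/-- The only `3 × 3` matrix with strictly positive integer entries satisfying `M² = 3M`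
is the matrix all of whose entries are `1`. -/
theorem stmt5 (M : Matrix (Fin 3) (Fin 3) ℕ) (hM : ∀ i j, 1 ≤ M i j)
    (h : M * M = 3 • M) :
    ∀ i j, M i j = 1 := by
  intro i j
  rcases eq_or_ne i j with rfl | hij
  · exact Matrix.diag_eq_one_of_mul_self_eq_three_smul hM h i
  · exact Matrix.apply_eq_one_of_mul_self_eq_three_smul hM h hij
end

section
/- There is no r×r matrix with strictly positive integer entries satisfying M² = 3M when r ≥ 4. -/
namespace Matrix

variable {n : Type*} [Fintype n] [DecidableEq n]

theorem apply_self_mul_self_add_card_sub_one_le (M : Matrix n n ℕ) (hM : ∀ i j, 1 ≤ M i j)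
    (i : n) : M i i * M i i + (Fintype.card n - 1) ≤ (M * M) i i := by
  have hoff : Fintype.card n - 1 ≤ ∑ k ∈ Finset.univ.erase i, M i k * M k i := by
    simpa [Finset.card_erase_of_mem] using
      Finset.card_nsmul_le_sum (Finset.univ.erase i) (fun k => M i k * M k i) 1
        (fun k _ => Nat.mul_le_mul (hM i k) (hM k i))
  rw [mul_apply, ← Finset.add_sum_erase _ _ (Finset.mem_univ i)]
  omega

/-- For a diagonal entry `m`, the equation `M * M = c • M` gives `m² + (card n - 1) ≤ c m`,
and `c m - m² ≤ c² / 4`. -/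
theorem four_mul_card_sub_one_le_sq_of_mul_self_eq_smul [Nonempty n] (M : Matrix n n ℕ)
    (hM : ∀ i j, 1 ≤ M i j) {c : ℕ} (h : M * M = c • M) :
    4 * (Fintype.card n - 1) ≤ c ^ 2 := by
  obtain ⟨i⟩ := ‹Nonempty n›
  have hdiag := apply_self_mul_self_add_card_sub_one_le M hM i
  rw [h, smul_apply, smul_eq_mul] at hdiag
  nlinarith [sq_nonneg ((c : ℤ) - 2 * M i i)]

end Matrix

/-- There is no `r × r` matrix with strictly positive integer entries satisfying `M² = 3M`
when `r ≥ 4`. -/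
theorem stmt6 {r : ℕ} (hr : 4 ≤ r) (M : Matrix (Fin r) (Fin r) ℕ)
    (hM : ∀ i j, 1 ≤ M i j) (h : M * M = 3 • M) :
    False := by
  have : Nonempty (Fin r) := ⟨⟨0, by omega⟩⟩
  have hbound := M.four_mul_card_sub_one_le_sq_of_mul_self_eq_smul hM h
  rw [Fintype.card_fin] at hbound
  omega
end

section
/- If M is an r×r matrix with strictly positive integer entries and M² = (n+2)M, then r ≤ n+2, and M = v wᵀ for column vectors v, w with positive integer entries satisfying wᵀv = n+2. -/
/-!
Every row of `M` is a positive left eigenvector of the positive matrix `M` for the eigenvalue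
`n + 2`. Two positive eigenvectors `x`, `y` of a positive matrix for the same eigenvalue are
proportional: at the index `j₀` minimising `x j / y j`, the vector `y j₀ • x - x j₀ • y` is a
nonnegative eigenvector with a zero entry, and positivity of the matrix forces it to vanish.
Hence all `2 × 2` minors of `M` vanish, and dividing one row by the gcd of its entries gives a
primitive `w` of which every row is an integer multiple: `M = v wᵀ`. Then `M² = (wᵀ v) M`, so
`wᵀ v = n + 2`, and `r ≤ wᵀ v` because all products `w i * v i` are at least `1`.
-/

open Matrix

open Finset in
theorem Matrix.mul_eq_mul_of_vecMul_eq_smul {K ι : Type*} [Field K] [LinearOrder K]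
    [IsStrictOrderedRing K] [Fintype ι] {A : Matrix ι ι K} (hA : ∀ i j, 0 < A i j) {c : K}
    {x y : ι → K} (hy : ∀ i, 0 < y i) (hxA : x ᵥ* A = c • x) (hyA : y ᵥ* A = c • y) (j l : ι) :
    x j * y l = x l * y j := by
  obtain ⟨j₀, -, hmin⟩ := exists_min_image univ (fun k => x k / y k) ⟨j, mem_univ j⟩
  set z := y j₀ • x - x j₀ • y with hz
  have hz_nonneg : ∀ k, 0 ≤ z k := fun k => by
    have := hmin k (mem_univ k)
    rw [div_le_div_iff₀ (hy j₀) (hy k)] at this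
    simp only [hz, Pi.sub_apply, Pi.smul_apply, smul_eq_mul, sub_nonneg]
    linarith
  have hzA : z ᵥ* A = c • z := by
    rw [hz, sub_vecMul, smul_vecMul, smul_vecMul, hxA, hyA, smul_sub, smul_comm _ c, smul_comm _ c]
  have hz_sum : ∑ k, z k * A k j₀ = 0 := by
    have := congrFun hzA j₀
    simp only [vecMul, dotProduct, Pi.smul_apply, smul_eq_mul] at this
    rw [this, hz]
    simp only [Pi.sub_apply, Pi.smul_apply, smul_eq_mul]
    ring
  have hz_zero : ∀ k, y j₀ * x k - x j₀ * y k = 0 := fun k =>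
    (mul_eq_zero.1 ((sum_eq_zero_iff_of_nonneg fun k _ =>
      mul_nonneg (hz_nonneg k) (hA k j₀).le).1 hz_sum k (mem_univ k))).resolve_right
      (hA k j₀).ne'
  apply mul_left_cancel₀ (hy j₀).ne'
  linear_combination y l * hz_zero j - y j * hz_zero l

theorem Finset.eq_gcd_mul_of_mul_eq_mul {ι : Type*} {s : Finset ι} {a w : ι → ℕ}
    (hw : s.gcd w = 1) (h : ∀ j ∈ s, ∀ l ∈ s, a j * w l = a l * w j) {j : ι} (hj : j ∈ s) :
    a j = s.gcd a * w j :=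
  calc a j = s.gcd fun l => a j * w l := by rw [gcd_mul_left, hw, normalize_eq, mul_one]
    _ = s.gcd fun l => a l * w j := gcd_congr rfl fun l hl => h j hj l hl
    _ = s.gcd a * w j := by rw [gcd_mul_right, normalize_eq]

theorem Matrix.mul_eq_mul_of_mul_self_eq_smul {ι : Type*} [Fintype ι] {M : Matrix ι ι ℕ}
    (hM : ∀ i j, 0 < M i j) {c : ℕ} (h : M * M = c • M) (i k j l : ι) :
    M i j * M k l = M i l * M k j := by
  set A : Matrix ι ι ℚ := M.map (↑)
  have hrow : ∀ i, A i ᵥ* A = (c : ℚ) • A i := fun i => funext fun j => by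
    have := congrFun (congrFun h i) j
    simp only [mul_apply, smul_apply, smul_eq_mul] at this
    simp only [A, vecMul, dotProduct, map_apply, Pi.smul_apply, smul_eq_mul]
    exact_mod_cast this
  have := mul_eq_mul_of_vecMul_eq_smul (fun i j => Nat.cast_pos.2 (hM i j))
    (fun j => Nat.cast_pos.2 (hM k j)) (hrow i) (hrow k) j l
  simp only [A, map_apply] at this
  exact_mod_cast this

theorem Matrix.exists_eq_vecMulVec_of_mul_eq_mul {ι κ : Type*} [Fintype κ] [Nonempty ι]
    [Nonempty κ] {M : Matrix ι κ ℕ} (hM : ∀ i j, 0 < M i j)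
    (hcross : ∀ i k j l, M i j * M k l = M i l * M k j) :
    ∃ v w, (∀ i, 0 < v i) ∧ (∀ j, 0 < w j) ∧ M = vecMulVec v w := by
  obtain ⟨i₀⟩ := ‹Nonempty ι›
  obtain ⟨j₀⟩ := ‹Nonempty κ›
  set g := Finset.univ.gcd (M i₀)
  set w := fun j => M i₀ j / g
  have hw : Finset.univ.gcd w = 1 := Finset.gcd_div_eq_one (Finset.mem_univ j₀) (hM i₀ j₀).ne'
  have hgw : ∀ j, M i₀ j = g * w j := fun j =>
    (Nat.mul_div_cancel' (Finset.gcd_dvd (Finset.mem_univ j))).symm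
  have hg : 0 < g := Nat.pos_of_mul_pos_right (hgw j₀ ▸ hM i₀ j₀)
  have hrow : ∀ i j, M i j = Finset.univ.gcd (M i) * w j := fun i j =>
    Finset.eq_gcd_mul_of_mul_eq_mul hw (fun j _ l _ => Nat.eq_of_mul_eq_mul_left hg (by
      rw [mul_left_comm, ← hgw, hcross, hgw]; ring)) (Finset.mem_univ j)
  refine ⟨fun i => Finset.univ.gcd (M i), w, fun i => ?_, fun j => ?_, ext fun i j => hrow i j⟩
  · exact Nat.pos_of_mul_pos_right (hrow i j₀ ▸ hM i j₀)
  · exact Nat.pos_of_mul_pos_left (hrow i₀ j ▸ hM i₀ j)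

theorem Matrix.dotProduct_eq_of_vecMulVec_mul_self_eq_smul {R ι : Type*} [CommSemiring R]
    [IsDomain R] [Fintype ι] {v w : ι → R} {c : R} {i j : ι} (hv : v i ≠ 0) (hw : w j ≠ 0)
    (h : vecMulVec v w * vecMulVec v w = c • vecMulVec v w) : w ⬝ᵥ v = c := by
  have := congrFun (congrFun h i) j
  rw [vecMulVec_mul_vecMulVec] at this
  simp only [vecMulVec_apply, smul_apply, Pi.smul_apply, smul_eq_mul] at this
  exact mul_right_cancel₀ (mul_ne_zero hv hw) (by rw [← this]; ring)

theorem Matrix.card_le_dotProduct {ι : Type*} [Fintype ι] {v w : ι → ℕ} (hv : ∀ i, 0 < v i)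
    (hw : ∀ i, 0 < w i) : Fintype.card ι ≤ w ⬝ᵥ v :=
  calc Fintype.card ι = ∑ _ : ι, 1 := by simp
    _ ≤ w ⬝ᵥ v := Finset.sum_le_sum fun i _ => Nat.mul_pos (hw i) (hv i)

theorem stmt7_general {n r : ℕ} (hr : 0 < r)
    (M : Matrix (Fin r) (Fin r) ℕ) (hM : ∀ i j, 1 ≤ M i j)
    (h : M * M = (n + 2) • M) :
    r ≤ n + 2 ∧ ∃ v w : Fin r → ℕ, (∀ i, 0 < v i) ∧ (∀ i, 0 < w i) ∧
      M = Matrix.vecMulVec v w ∧ w ⬝ᵥ v = n + 2 := by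
  have : NeZero r := ⟨hr.ne'⟩
  obtain ⟨v, w, hv, hw, rfl⟩ :=
    exists_eq_vecMulVec_of_mul_eq_mul hM (mul_eq_mul_of_mul_self_eq_smul hM h)
  have htrace : w ⬝ᵥ v = n + 2 :=
    dotProduct_eq_of_vecMulVec_mul_self_eq_smul (hv 0).ne' (hw 0).ne' h
  exact ⟨by simpa [htrace] using card_le_dotProduct hv hw, v, w, hv, hw, rfl, htrace⟩

/-- If `M` is an `r × r` matrix with strictly positive integer entries and `M² = (n+2)M`,
then `r ≤ n + 2`, and `M = v wᵀ` for column vectors `v, w` with positive integer entries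
satisfying `wᵀ v = n + 2`. -/
theorem stmt7 {n r : ℕ} (hn : 1 ≤ n) (hr : 0 < r)
    (M : Matrix (Fin r) (Fin r) ℕ) (hM : ∀ i j, 1 ≤ M i j)
    (h : M * M = (n + 2) • M) :
    r ≤ n + 2 ∧ ∃ v w : Fin r → ℕ, (∀ i, 0 < v i) ∧ (∀ i, 0 < w i) ∧
      M = Matrix.vecMulVec v w ∧ w ⬝ᵥ v = n + 2 :=
  stmt7_general hr M hM h
end

section
/- Let M₀, M₁, ..., M_n be nonzero nonnegative integer r×r matrices whose sum M has all entries positive, satisfying M_i M_j = a_j M_i where a₀ = 2 and a_j = 1 for j ≥ 1. Then no M_j has a zero column. -/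
theorem Matrix.exists_ne_zero_of_mul_eq_smul_self {m n R : Type*} [Fintype n]
    [Semiring R] [NoZeroDivisors R] {A : Matrix m n R} {B : Matrix n n R} {a : R}
    (hAB : A * B = a • A) (ha : a ≠ 0) {p : m} {c : n} (hAc : A p c ≠ 0) :
    ∃ q, B q c ≠ 0 := by
  by_contra! hB
  have hABc : (A * B) p c = 0 := by simp [Matrix.mul_apply, hB]
  rw [hAB, Matrix.smul_apply, smul_eq_mul] at hABc
  exact mul_ne_zero ha hAc hABc

theorem stmt9_general {n r : ℕ}
    (Ms : Fin (n + 1) → Matrix (Fin r) (Fin r) ℕ)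
    (hpos : ∀ p q, 1 ≤ (∑ i, Ms i) p q)
    (hmul : ∀ i j, Ms i * Ms j = (if j = 0 then 2 else 1 : ℕ) • Ms i) :
    ∀ (j : Fin (n + 1)) (c : Fin r), ∃ p : Fin r, Ms j p c ≠ 0 := by
  intro j c
  -- A zero column of `Mⱼ` would be a zero column of `(∑ Mᵢ) Mⱼ = aⱼ ∑ Mᵢ`, which is positive.
  have hsum : (∑ i, Ms i) * Ms j = (if j = 0 then 2 else 1 : ℕ) • ∑ i, Ms i := by
    rw [Finset.sum_mul, Finset.smul_sum]
    exact Finset.sum_congr rfl fun i _ => hmul i j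
  refine Matrix.exists_ne_zero_of_mul_eq_smul_self hsum ?_ (Nat.one_le_iff_ne_zero.mp (hpos c c))
  split_ifs <;> norm_num

/-- Let `M₀, …, Mₙ` be nonzero nonnegative integer `r × r` matrices whose sum `M` has all
entries positive, satisfying `Mᵢ Mⱼ = aⱼ Mᵢ` where `a₀ = 2` and `aⱼ = 1` for `j ≥ 1`.
Then no `Mⱼ` has a zero column. -/
theorem stmt9 {n r : ℕ} (hn : 1 ≤ n) (hr : 1 ≤ r)
    (Ms : Fin (n + 1) → Matrix (Fin r) (Fin r) ℕ)
    (hnz : ∀ i, Ms i ≠ 0)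
    (hpos : ∀ p q, 1 ≤ (∑ i, Ms i) p q)
    (hmul : ∀ i j, Ms i * Ms j = (if j = 0 then 2 else 1 : ℕ) • Ms i) :
    ∀ (j : Fin (n + 1)) (c : Fin r), ∃ p : Fin r, Ms j p c ≠ 0 :=
  stmt9_general Ms hpos hmul
end

section
/- Let M₀, ..., M_n be as in the setup (quasi-idempotent system with M_i M_j = a_j M_i, a_0 = 2, a_j = 1 for j ≥ 1, and Σ M_i positive of size r×r with (Σ M_i)² = (n+2)(Σ M_i)). Then the trace of M₀ is 2 and the trace of each M_i (i ≥ 1) is 1. -/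
/-!
The sum `M = Σ Mᵢ` is a positive matrix with `M² = (n+2) M`, so every column of `M` is a positive
eigenvector for the eigenvalue `n + 2`. Comparing two such columns at the index where their ratio
is minimal shows that they are proportional, so `M` has rank one and `(tr M)² = tr M² = (n+2) tr M`,
i.e. `tr M = n + 2`. On the other hand `tr (Mᵢ M₀) = tr (M₀ Mᵢ)` gives `2 tr Mᵢ = tr M₀` for
`i ≥ 1`, and summing, `(n+2) tr M₀ = 2 (n+2)`.
-/

open Matrix

namespace Matrix

variable {ι K : Type*} [Fintype ι]

theorem mul_eq_mul_of_mulVec_eq_smul [Field K] [LinearOrder K] [IsStrictOrderedRing K]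
    {A : Matrix ι ι K} (hA : ∀ i j, 0 < A i j) {c : K} {x y : ι → K} (hy : ∀ i, 0 < y i)
    (hAx : A *ᵥ x = c • x) (hAy : A *ᵥ y = c • y) (i j : ι) :
    x i * y j = x j * y i := by
  obtain ⟨p, -, hp⟩ :=
    Finset.exists_min_image Finset.univ (fun k => x k / y k) ⟨i, Finset.mem_univ i⟩
  have hle : ∀ k, A p k * (x p * y k) ≤ A p k * (x k * y p) := fun k => by
    have := hp k (Finset.mem_univ k)
    rw [div_le_div_iff₀ (hy p) (hy k)] at this
    exact mul_le_mul_of_nonneg_left this (hA p k).le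
  -- Both sums equal `c * x p * y p`, so the termwise inequalities are equalities.
  have hsum : ∑ k, A p k * (x p * y k) = ∑ k, A p k * (x k * y p) := by
    have hx' := congrFun hAx p
    have hy' := congrFun hAy p
    simp only [mulVec, dotProduct, Pi.smul_apply, smul_eq_mul] at hx' hy'
    calc ∑ k, A p k * (x p * y k) = x p * ∑ k, A p k * y k := by
          rw [Finset.mul_sum]; exact Finset.sum_congr rfl fun k _ => by ring
      _ = (∑ k, A p k * x k) * y p := by rw [hx', hy']; ring
      _ = ∑ k, A p k * (x k * y p) := by
          rw [Finset.sum_mul]; exact Finset.sum_congr rfl fun k _ => by ring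
  have hprop : ∀ k, x p * y k = x k * y p := fun k =>
    mul_left_cancel₀ (hA p k).ne'
      ((Finset.sum_eq_sum_iff_of_le fun k _ => hle k).mp hsum k (Finset.mem_univ k))
  have hx : ∀ k, x k = x p / y p * y k := fun k => by
    rw [div_mul_eq_mul_div, hprop k, mul_div_cancel_right₀ _ (hy p).ne']
  rw [hx i, hx j]
  ring

theorem trace_mul_self_of_apply_mul_apply_swap [CommSemiring K] {M : Matrix ι ι K}
    (h : ∀ i j, M i j * M j i = M i i * M j j) : trace (M * M) = trace M * trace M := by
  simp only [trace, diag, mul_apply, h, Finset.sum_mul_sum]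

theorem trace_eq_of_mul_self_eq_smul_s10 [Field K] [LinearOrder K] [IsStrictOrderedRing K]
    [Nonempty ι] {M : Matrix ι ι K} (hM : ∀ i j, 0 < M i j) {c : K} (hsq : M * M = c • M) :
    trace M = c := by
  have hcol : ∀ q, M *ᵥ (fun i => M i q) = c • fun i => M i q := fun q => by
    ext i
    simpa [mulVec, dotProduct, mul_apply] using congrFun (congrFun hsq i) q
  have hrank : ∀ i j, M i j * M j i = M i i * M j j := fun i j => by
    have := mul_eq_mul_of_mulVec_eq_smul hM (hM · j) (hcol i) (hcol j) i j
    linear_combination -this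
  have htr : 0 < trace M :=
    Finset.sum_pos (fun i _ => hM i i) Finset.univ_nonempty
  have := trace_mul_self_of_apply_mul_apply_swap hrank
  rw [hsq, trace_smul, smul_eq_mul] at this
  exact (mul_right_cancel₀ htr.ne' this).symm

theorem trace_eq_of_mul_self_eq_smul_nat [Nonempty ι] {M : Matrix ι ι ℕ} (hM : ∀ i j, 0 < M i j)
    {c : ℕ} (hsq : M * M = c • M) : trace M = c := by
  have hsqℚ : M.map (Nat.cast : ℕ → ℚ) * M.map Nat.cast = (c : ℚ) • M.map Nat.cast := by
    ext i j
    have := congrFun (congrFun hsq i) j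
    simp only [mul_apply, smul_apply, map_apply, smul_eq_mul] at this ⊢
    exact_mod_cast this
  have := trace_eq_of_mul_self_eq_smul_s10 (fun i j => by simpa using hM i j) hsqℚ
  simp only [trace, diag, map_apply] at this
  exact_mod_cast this

theorem smul_trace_eq_of_mul_eq_smul [CommSemiring K] {A B : Matrix ι ι K} {a b : K}
    (hAB : A * B = a • A) (hBA : B * A = b • B) : a * trace A = b * trace B := by
  rw [← smul_eq_mul, ← trace_smul, ← hAB, trace_mul_comm, hBA, trace_smul, smul_eq_mul]

end Matrix

theorem stmt10_general {n r : ℕ}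
    (Ms : Fin (n + 1) → Matrix (Fin r) (Fin r) ℕ)
    (hnz : ∀ i, Ms i ≠ 0)
    (hpos : ∀ p q, 1 ≤ (∑ i, Ms i) p q)
    (hsq : (∑ i, Ms i) * (∑ i, Ms i) = (n + 2) • (∑ i, Ms i))
    (hmul : ∀ i j, Ms i * Ms j = (if j = 0 then 2 else 1 : ℕ) • Ms i) :
    Matrix.trace (Ms 0) = 2 ∧ ∀ i : Fin (n + 1), i ≠ 0 → Matrix.trace (Ms i) = 1 := by
  have : Nonempty (Fin r) := by
    by_contra h
    exact hnz 0 (ext fun p => (h ⟨p⟩).elim)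
  have hsum : trace (Ms 0) + ∑ j : Fin n, trace (Ms j.succ) = n + 2 := by
    rw [← Fin.sum_univ_succ fun i => trace (Ms i), ← trace_sum]
    exact trace_eq_of_mul_self_eq_smul_nat hpos hsq
  have hhalf : ∀ j : Fin n, 2 * trace (Ms j.succ) = trace (Ms 0) := fun j => by
    simpa [Fin.succ_ne_zero] using smul_trace_eq_of_mul_eq_smul (hmul j.succ 0) (hmul 0 j.succ)
  have h0 : trace (Ms 0) = 2 := by
    have : (n + 2) * trace (Ms 0) = (n + 2) * 2 := by
      calc (n + 2) * trace (Ms 0) = 2 * (trace (Ms 0) + ∑ j : Fin n, trace (Ms j.succ)) := by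
            simp only [mul_add, Finset.mul_sum, hhalf, Finset.sum_const, Finset.card_univ,
              Fintype.card_fin, smul_eq_mul]
            ring
        _ = (n + 2) * 2 := by rw [hsum]; ring
    exact Nat.eq_of_mul_eq_mul_left (by omega) this
  refine ⟨h0, fun i hi => ?_⟩
  obtain ⟨j, rfl⟩ := Fin.exists_succ_eq.mpr hi
  have := hhalf j
  omega

/-- In the quasi-idempotent system `M₀, …, Mₙ` with `Mᵢ Mⱼ = aⱼ Mᵢ` (`a₀ = 2`, `aⱼ = 1`
for `j ≥ 1`), `Σ Mᵢ` positive with `(Σ Mᵢ)² = (n+2)(Σ Mᵢ)`, and the diagonal entries of `M₀`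
lying in `{0, 2}`, the trace of `M₀` is `2` and the trace of each `Mᵢ` (`i ≥ 1`) is `1`. -/
theorem stmt10 {n r : ℕ} (hn : 1 ≤ n)
    (Ms : Fin (n + 1) → Matrix (Fin r) (Fin r) ℕ)
    (hnz : ∀ i, Ms i ≠ 0)
    (hpos : ∀ p q, 1 ≤ (∑ i, Ms i) p q)
    (hsq : (∑ i, Ms i) * (∑ i, Ms i) = (n + 2) • (∑ i, Ms i))
    (hmul : ∀ i j, Ms i * Ms j = (if j = 0 then 2 else 1 : ℕ) • Ms i)
    (hdiag : ∀ p, Ms 0 p p = 0 ∨ Ms 0 p p = 2) :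
    Matrix.trace (Ms 0) = 2 ∧ ∀ i : Fin (n + 1), i ≠ 0 → Matrix.trace (Ms i) = 1 :=
  stmt10_general Ms hnz hpos hsq hmul
end
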